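/- arXiv:1308.5031 — 8 statements merged into one kernel-verified Lean document; each statement's English description precedes it below -/
import Mathlib

section
/- For every photodetection efficiency η ∈ (0,1], there exist a coherent-state amplitude α > 0 and a state angle ν ∈ ℝ such that (2·c₁(α)·cos ν·sin ν)² + (cos²ν − c₃(α,η)·sin²ν)² > 1; equivalently, the optimized CHSH value S = 2√((2c₁ cos ν sin ν)² + (c₂ cos²ν − c₃ sin²ν)²) with c₂ = 1 exceeds 2, so the Bell inequality is violated at perfect line transmission for arbitrarily low photodetection efficiency η. -/
open Real

/-- Optimal homodyne binning parameter `b₀(α) = π / (2√2 α)`. -/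
noncomputable def b0 (α : ℝ) : ℝ := π / (2 * Real.sqrt 2 * α)

/-- Homodyne interference coefficient at perfect transmission:
`c₁(α) = (2/√π)·∫_{−b₀}^{b₀} e^{−x²} cos(√2 x α) dx − e^{−α²/2}`. -/
noncomputable def c1 (α : ℝ) : ℝ :=
  (2 / Real.sqrt π) *
      (∫ x in (-b0 α)..(b0 α), Real.exp (-x ^ 2) * Real.cos (Real.sqrt 2 * x * α))
    - Real.exp (-α ^ 2 / 2)

/-- Photocounting coefficient `c₃(α,η) = 2·e^{−η α²/2} − 1`. -/
noncomputable def c3 (α η : ℝ) : ℝ := 2 * Real.exp (-η * α ^ 2 / 2) - 1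

lemma exp_neg_lt_four_div_sq {y : ℝ} (hy : 0 < y) : Real.exp (-y) < 4 / y ^ 2 := by
  have h := Real.add_one_le_exp (y / 2)
  have h2 : Real.exp (y / 2) * Real.exp (y / 2) = Real.exp y := by
    rw [← Real.exp_add]; ring_nf
  have hlt : y ^ 2 / 4 < Real.exp y := by nlinarith
  rw [Real.exp_neg, inv_lt_comm₀ (Real.exp_pos y) (by positivity)]
  rw [show ((4:ℝ) / y ^ 2)⁻¹ = y ^ 2 / 4 by field_simp]
  exact hlt

set_option maxHeartbeats 1000000 in
lemma c1_lower {α : ℝ} (hα : 15 ≤ α) : 1 / α ≤ c1 α := by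
  have hα0 : 0 < α := by linarith
  have hs2sq : Real.sqrt 2 ^ 2 = 2 := Real.sq_sqrt (by norm_num)
  have hs2nn := Real.sqrt_nonneg 2
  have hs2l : (1.4 : ℝ) ≤ Real.sqrt 2 := by nlinarith
  have hs2u : Real.sqrt 2 ≤ 1.5 := by nlinarith
  have hs2p : (0:ℝ) < Real.sqrt 2 := by linarith
  have hπ4 := Real.pi_le_four
  have hπ0 := Real.pi_pos
  set b := b0 α with hb
  have hbpos : 0 < b := by rw [hb, b0]; positivity
  have hcb : Real.sqrt 2 * α * b = π / 2 := by
    rw [hb, b0]; field_simp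
  have hbu : b ≤ 1.43 / α := by
    rw [hb, b0, div_le_div_iff₀ (by positivity) hα0]
    nlinarith
  -- pointwise bound on the integrand
  have hpw : ∀ x ∈ Set.Icc (-b) b,
      Real.cos (Real.sqrt 2 * α * x) - x ^ 2
        ≤ Real.exp (-x ^ 2) * Real.cos (Real.sqrt 2 * x * α) := by
    intro x hx
    obtain ⟨hx1, hx2⟩ := hx
    have harg : Real.sqrt 2 * x * α = Real.sqrt 2 * α * x := by ring
    rw [harg]
    have hxcos : 0 ≤ Real.cos (Real.sqrt 2 * α * x) := by
      apply Real.cos_nonneg_of_mem_Icc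
      constructor <;> nlinarith
    have hcos1 : Real.cos (Real.sqrt 2 * α * x) ≤ 1 := Real.cos_le_one _
    have he : 1 - x ^ 2 ≤ Real.exp (-x ^ 2) := by
      have := Real.add_one_le_exp (-x ^ 2); linarith
    have he1 : Real.exp (-x ^ 2) ≤ 1 := Real.exp_le_one_iff.2 (by positivity |> neg_nonpos_of_nonneg)
    nlinarith [mul_le_mul_of_nonneg_right he1 hxcos]
  -- integrability
  have hi1 : IntervalIntegrable
      (fun x => Real.exp (-x ^ 2) * Real.cos (Real.sqrt 2 * x * α)) MeasureTheory.volume (-b) b := by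
    apply Continuous.intervalIntegrable; fun_prop
  have hicos : IntervalIntegrable
      (fun x => Real.cos (Real.sqrt 2 * α * x)) MeasureTheory.volume (-b) b := by
    apply Continuous.intervalIntegrable; fun_prop
  have hipow : IntervalIntegrable (fun x : ℝ => x ^ 2) MeasureTheory.volume (-b) b := by
    apply Continuous.intervalIntegrable; fun_prop
  have hi2 : IntervalIntegrable
      (fun x => Real.cos (Real.sqrt 2 * α * x) - x ^ 2) MeasureTheory.volume (-b) b :=
    hicos.sub hipow
  have hmono := intervalIntegral.integral_mono_on (by linarith : -b ≤ b) hi2 hi1 hpw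
  -- compute the lower integral
  have hI1 : (∫ x in (-b)..b, Real.cos (Real.sqrt 2 * α * x)) = 2 / (Real.sqrt 2 * α) := by
    rw [intervalIntegral.integral_comp_mul_left Real.cos (by positivity : Real.sqrt 2 * α ≠ 0)]
    rw [integral_cos, mul_neg, Real.sin_neg, hcb, Real.sin_pi_div_two]
    rw [smul_eq_mul]; ring
  have hI2 : (∫ x in (-b)..b, (x:ℝ) ^ 2) = 2 * b ^ 3 / 3 := by
    rw [integral_pow]; ring
  have hJ : (∫ x in (-b)..b, (Real.cos (Real.sqrt 2 * α * x) - x ^ 2))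
      = 2 / (Real.sqrt 2 * α) - 2 * b ^ 3 / 3 := by
    rw [intervalIntegral.integral_sub hicos hipow, hI1, hI2]
  rw [hJ] at hmono
  -- bounds on √π
  have hsπsq : Real.sqrt π ^ 2 = π := Real.sq_sqrt hπ0.le
  have hsπnn := Real.sqrt_nonneg π
  have hsπu : Real.sqrt π ≤ 2 := by nlinarith
  have hsπp : (0:ℝ) < Real.sqrt π := by positivity
  have h2π : (1:ℝ) ≤ 2 / Real.sqrt π := by rw [le_div_iff₀ hsπp]; linarith
  -- bound J from below
  have hbα : α * b ≤ 1.43 := by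
    have := (le_div_iff₀ hα0).1 hbu
    linarith [this]
  have hb15 : b ≤ 0.0954 := by
    have h1 : (1.43:ℝ) / α ≤ 1.43 / 15 := by
      apply div_le_div_of_nonneg_left (by norm_num) (by norm_num) hα
    have h2 : (1.43:ℝ) / 15 ≤ 0.0954 := by norm_num
    linarith
  have hα2 : (225:ℝ) ≤ α ^ 2 := by nlinarith
  have hα3 : (3375:ℝ) ≤ α ^ 3 := by nlinarith
  have h2a : α * (2 / (Real.sqrt 2 * α)) = 2 / Real.sqrt 2 := by
    field_simp
  have hs2inv : (1.33:ℝ) ≤ 2 / Real.sqrt 2 := by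
    rw [le_div_iff₀ hs2p]; nlinarith
  have hbsq : b ^ 2 ≤ 0.0091 := by nlinarith
  have hcube : α * (2 * b ^ 3 / 3) ≤ 0.01 := by
    have h1 : α * (2 * b ^ 3 / 3) = (2/3) * ((α * b) * b ^ 2) := by ring
    rw [h1]
    nlinarith [mul_le_mul hbα hbsq (sq_nonneg b) (by norm_num : (0:ℝ) ≤ 1.43)]
  have hJlb : 1.31 / α ≤ 2 / (Real.sqrt 2 * α) - 2 * b ^ 3 / 3 := by
    rw [div_le_iff₀ hα0]
    nlinarith [h2a, hs2inv, hcube]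
  have hIlb : 1.31 / α ≤ ∫ x in (-b)..b, Real.exp (-x ^ 2) * Real.cos (Real.sqrt 2 * x * α) :=
    le_trans hJlb hmono
  have hIpos : (0:ℝ) ≤ ∫ x in (-b)..b, Real.exp (-x ^ 2) * Real.cos (Real.sqrt 2 * x * α) :=
    le_trans (by positivity) hIlb
  have hstep : 1.31 / α ≤ (2 / Real.sqrt π) *
      ∫ x in (-b)..b, Real.exp (-x ^ 2) * Real.cos (Real.sqrt 2 * x * α) :=
    le_trans hIlb (le_mul_of_one_le_left hIpos h2π)
  have hexp : Real.exp (-α ^ 2 / 2) < 16 / α ^ 4 := by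
    have h := exp_neg_lt_four_div_sq (show (0:ℝ) < α ^ 2 / 2 by positivity)
    have h1 : -α ^ 2 / 2 = -(α ^ 2 / 2) := by ring
    have h2 : 4 / (α ^ 2 / 2) ^ 2 = 16 / α ^ 4 := by
      field_simp; ring
    rw [h1]; rw [h2] at h; exact h
  have h16 : 16 / α ^ 4 ≤ 0.01 / α := by
    rw [div_le_div_iff₀ (by positivity) hα0]
    nlinarith
  show 1 / α ≤ c1 α
  have hc1eq : c1 α = (2 / Real.sqrt π) *
      (∫ x in (-b)..b, Real.exp (-x ^ 2) * Real.cos (Real.sqrt 2 * x * α))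
    - Real.exp (-α ^ 2 / 2) := by rw [c1, hb]
  rw [hc1eq]
  have hfrac : (1:ℝ) / α ≤ 1.30 / α := by
    rw [div_le_div_iff₀ hα0 hα0]
    nlinarith
  have hfin : 1.31 / α - 1e-2 / α ≤
      (2 / Real.sqrt π * ∫ x in (-b)..b, Real.exp (-x ^ 2) * Real.cos (Real.sqrt 2 * x * α))
        - Real.exp (-α ^ 2 / 2) := by linarith
  have heq : 1.31 / α - 1e-2 / α = 1.30 / α := by ring
  linarith [hfin, hfrac, heq]

set_option maxHeartbeats 1000000 in
/-- For every photodetection efficiency `η ∈ (0,1]` there exist an amplitude `α > 0` and a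
state angle `ν` with `(2 c₁ cos ν sin ν)² + (cos²ν − c₃ sin²ν)² > 1`, i.e. the optimized CHSH
value `2·√(…)` (with `c₂ = 1`) exceeds `2` at perfect line transmission, for arbitrarily low
photodetection efficiency. -/
theorem bell_violation_arbitrarily_low_efficiency :
    ∀ η ∈ Set.Ioc (0 : ℝ) 1, ∃ α > (0 : ℝ), ∃ ν : ℝ,
      (2 * c1 α * Real.cos ν * Real.sin ν) ^ 2
        + (Real.cos ν ^ 2 - c3 α η * Real.sin ν ^ 2) ^ 2 > 1 := by
  rintro η ⟨hη0, hη1⟩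
  refine ⟨15 / η, by positivity, ?_⟩
  set α : ℝ := 15 / η with hαdef
  have hα0 : 0 < α := by positivity
  have hα15 : (15:ℝ) ≤ α := by
    rw [hαdef, le_div_iff₀ hη0]; nlinarith
  have hc1 : 1 / α ≤ c1 α := c1_lower hα15
  -- exponential bound
  have hηa : η * α ^ 2 = 225 / η := by
    rw [hαdef]; field_simp; ring
  have hy : (0:ℝ) < η * α ^ 2 / 2 := by positivity
  have hE : Real.exp (-(η * α ^ 2 / 2)) < 4 / (η * α ^ 2 / 2) ^ 2 :=
    exp_neg_lt_four_div_sq hy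
  have hEbound : Real.exp (-η * α ^ 2 / 2) < 1 / α ^ 2 := by
    have h1 : -η * α ^ 2 / 2 = -(η * α ^ 2 / 2) := by ring
    rw [h1]
    refine lt_of_lt_of_le hE ?_
    rw [hηa, hαdef]
    rw [div_le_div_iff₀ (by positivity) (by positivity)]
    have hη2 : (0:ℝ) < η ^ 2 := by positivity
    have h2 : (225 / η / 2) ^ 2 = 12656.25 / η ^ 2 := by
      field_simp; ring
    rw [h2]
    have h3 : (15 / η) ^ 2 = 225 / η ^ 2 := by rw [div_pow]; norm_num
    rw [h3]
    rw [show (4:ℝ) * (225 / η ^ 2) = 900 / η ^ 2 from by ring,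
      show (1:ℝ) * (12656.25 / η ^ 2) = 12656.25 / η ^ 2 from by ring,
      div_le_div_iff_of_pos_right hη2]
    norm_num
  have hd0 : (0:ℝ) < (c1 α) ^ 2 := by
    have h : (0:ℝ) < 1 / α := by positivity
    nlinarith [mul_pos (lt_of_lt_of_le h hc1) (lt_of_lt_of_le h hc1)]
  have hdE : Real.exp (-η * α ^ 2 / 2) < (c1 α) ^ 2 := by
    refine lt_of_lt_of_le hEbound ?_
    have h1 : (1 / α) ^ 2 ≤ (c1 α) ^ 2 := by
      apply pow_le_pow_left₀ (by positivity) hc1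
    rw [div_pow] at h1; simpa using h1
  -- choose the state angle
  set d : ℝ := (c1 α) ^ 2 with hddef
  set k : ℝ := 2 * Real.exp (-η * α ^ 2 / 2) with hkdef
  have hk0 : 0 < k := by rw [hkdef]; positivity
  have hkd : k < 2 * d := by rw [hkdef, hddef]; linarith
  set t : ℝ := 1 / 2 - k / (4 * d) with htdef
  have ht0 : 0 < t := by
    rw [htdef]
    have : k / (4 * d) < 1 / 2 := by
      rw [div_lt_div_iff₀ (by linarith) (by norm_num)]; linarith
    linarith
  have ht1 : t ≤ 1 := by
    rw [htdef]
    have : 0 ≤ k / (4 * d) := by positivity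
    linarith
  refine ⟨Real.arcsin (Real.sqrt t), ?_⟩
  have hst : Real.sqrt t ≤ 1 := by
    rw [show (1:ℝ) = Real.sqrt 1 by simp]
    exact Real.sqrt_le_sqrt ht1
  have hsin : Real.sin (Real.arcsin (Real.sqrt t)) = Real.sqrt t :=
    Real.sin_arcsin (by positivity |> le_trans (by norm_num : (-1:ℝ) ≤ 0)) hst
  have hsin2 : Real.sin (Real.arcsin (Real.sqrt t)) ^ 2 = t := by
    rw [hsin]; exact Real.sq_sqrt ht0.le
  have hcos2 : Real.cos (Real.arcsin (Real.sqrt t)) ^ 2 = 1 - t := by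
    have h := Real.sin_sq_add_cos_sq (Real.arcsin (Real.sqrt t))
    linarith [hsin2, h]
  have hc3 : c3 α η = k - 1 := by rw [c3, hkdef]
  have hexpand : (2 * c1 α * Real.cos (Real.arcsin (Real.sqrt t)) * Real.sin (Real.arcsin (Real.sqrt t))) ^ 2
        + (Real.cos (Real.arcsin (Real.sqrt t)) ^ 2 - c3 α η * Real.sin (Real.arcsin (Real.sqrt t)) ^ 2) ^ 2
      = 4 * d * ((1 - t) * t) + (1 - k * t) ^ 2 := by
    rw [hc3]
    have h1 : (2 * c1 α * Real.cos (Real.arcsin (Real.sqrt t)) * Real.sin (Real.arcsin (Real.sqrt t))) ^ 2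
        = 4 * (c1 α) ^ 2 * (Real.cos (Real.arcsin (Real.sqrt t)) ^ 2 * Real.sin (Real.arcsin (Real.sqrt t)) ^ 2) := by
      ring
    rw [h1, hsin2, hcos2, ← hddef]
    ring
  rw [hexpand]
  have h4d : 4 * d * (1 - t) = 2 * d + k := by
    rw [htdef]; field_simp; ring
  nlinarith [mul_pos ht0 (show (0:ℝ) < 2 * d - k + k ^ 2 * t by nlinarith [sq_nonneg k, mul_pos (mul_pos hk0 hk0) ht0])]
end

section
/- For every η > 0 there exists α₀ > 0 such that for all α ≥ α₀, condition C2 holds with c₂ = 1: namely c₂·(c₂ + c₃(α,η)) = 2·e^{−η·α²/2} < 2·c₁(α)². In words: for any fixed photodetection efficiency, the violation condition is satisfied for all sufficiently large coherent-state amplitudes. -/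
set_option maxHeartbeats 1000000


open Real

open intervalIntegral in
/-- Exact value of the reference cosine integral. -/
lemma integral_cos_lower (α : ℝ) (hα0 : (0:ℝ) < α) :
    ∫ x in (-b0 α)..(b0 α), Real.cos ((Real.sqrt 2 * α) * x)
      = (Real.sqrt 2 * α)⁻¹ * 2 := by
  have hc : Real.sqrt 2 * α ≠ 0 := by positivity
  have hb : Real.sqrt 2 * α * b0 α = π / 2 := by
    unfold b0; field_simp
  rw [show (-b0 α) = -(b0 α) from rfl,
    integral_comp_mul_left (c := Real.sqrt 2 * α) Real.cos hc, mul_neg, hb, integral_cos]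
  simp
  left; norm_num

lemma sqrt_two_ge : (1.414 : ℝ) ≤ Real.sqrt 2 := by
  have : ((1.414 : ℝ)) = Real.sqrt (1.414 ^ 2) := by
    rw [Real.sqrt_sq]; norm_num
  rw [this]
  exact Real.sqrt_le_sqrt (by norm_num)

lemma sqrt_pi_le : Real.sqrt π ≤ 1.775 := by
  have h : π ≤ (1.775 : ℝ) ^ 2 := by nlinarith [Real.pi_lt_d2]
  calc Real.sqrt π ≤ Real.sqrt ((1.775:ℝ)^2) := Real.sqrt_le_sqrt h
    _ = 1.775 := Real.sqrt_sq (by norm_num)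

/-- Key lower bound on `c1` for large amplitudes. -/
lemma c1_ge (α : ℝ) (hα : (4:ℝ) ≤ α) : 1 / α ≤ c1 α := by
  have hα0 : (0:ℝ) < α := by linarith
  have hs2 : (1.414 : ℝ) ≤ Real.sqrt 2 := sqrt_two_ge
  have hs2' : (0:ℝ) < Real.sqrt 2 := by linarith
  have hb0pos : 0 < b0 α := by
    unfold b0; positivity
  -- bound on b0 and b0^2
  have hbsq : b0 α ^ 2 ≤ 0.078 := by
    have hpi : π < 3.15 := Real.pi_lt_d2
    have hpi0 : 0 < π := Real.pi_pos
    have h2 : b0 α ≤ 0.279 := by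
      have h1 : b0 α ≤ 3.15 / (2 * 1.414 * 4) := by
        unfold b0
        apply div_le_div₀ (by norm_num) hpi.le (by nlinarith) (by nlinarith)
      linarith [h1]
    nlinarith [hb0pos]
  -- cos factor is nonneg on the interval
  have hcosnn : ∀ x ∈ Set.Icc (-b0 α) (b0 α), 0 ≤ Real.cos (Real.sqrt 2 * α * x) := by
    intro x hx
    apply Real.cos_nonneg_of_mem_Icc
    constructor
    · have : Real.sqrt 2 * α * x ≥ Real.sqrt 2 * α * (-(b0 α)) := by
        apply mul_le_mul_of_nonneg_left hx.1 (by positivity)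
      have hb : Real.sqrt 2 * α * b0 α = π / 2 := by
        unfold b0; field_simp
      rw [mul_neg, hb] at this; linarith
    · have : Real.sqrt 2 * α * x ≤ Real.sqrt 2 * α * b0 α := by
        apply mul_le_mul_of_nonneg_left hx.2 (by positivity)
      have hb : Real.sqrt 2 * α * b0 α = π / 2 := by
        unfold b0; field_simp
      rw [hb] at this; linarith
  -- integral lower bound
  have hIntLB :
      (1 - b0 α ^ 2) * ((Real.sqrt 2 * α)⁻¹ * 2)
        ≤ ∫ x in (-b0 α)..(b0 α), Real.exp (-x ^ 2) * Real.cos (Real.sqrt 2 * x * α) := by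
    have hle : -b0 α ≤ b0 α := by linarith
    have hf : IntervalIntegrable (fun x => (1 - b0 α ^ 2) * Real.cos (Real.sqrt 2 * α * x))
        MeasureTheory.volume (-b0 α) (b0 α) := by
      apply Continuous.intervalIntegrable; fun_prop
    have hg : IntervalIntegrable (fun x => Real.exp (-x ^ 2) * Real.cos (Real.sqrt 2 * x * α))
        MeasureTheory.volume (-b0 α) (b0 α) := by
      apply Continuous.intervalIntegrable; fun_prop
    have hmono := intervalIntegral.integral_mono_on hle hf hg ?_
    · calc (1 - b0 α ^ 2) * ((Real.sqrt 2 * α)⁻¹ * 2)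
          = ∫ x in (-b0 α)..(b0 α), (1 - b0 α ^ 2) * Real.cos (Real.sqrt 2 * α * x) := by
            rw [intervalIntegral.integral_const_mul, integral_cos_lower α hα0]
        _ ≤ _ := hmono
    · intro x hx
      have hxsq : x ^ 2 ≤ b0 α ^ 2 := sq_le_sq' hx.1 hx.2
      have hexp : 1 - b0 α ^ 2 ≤ Real.exp (-x ^ 2) := by
        have := Real.add_one_le_exp (-x ^ 2)
        linarith
      have hcos := hcosnn x hx
      have hcomm : Real.sqrt 2 * x * α = Real.sqrt 2 * α * x := by ring
      rw [hcomm]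
      exact mul_le_mul_of_nonneg_right hexp hcos
  -- exp tail bound: exp (-α²/2) ≤ 16 / α⁴
  have hexp_tail : Real.exp (-α ^ 2 / 2) ≤ 16 / α ^ 4 := by
    have h1 : (1 + α ^ 2 / 4) ≤ Real.exp (α ^ 2 / 4) := by
      linarith [Real.add_one_le_exp (α ^ 2 / 4)]
    have h3 : Real.exp (α ^ 2 / 4) ^ 2 = Real.exp (α ^ 2 / 2) := by
      rw [sq, ← Real.exp_add]; ring_nf
    have h2 : (1 + α ^ 2 / 4) ^ 2 ≤ Real.exp (α ^ 2 / 4) ^ 2 :=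
      pow_le_pow_left₀ (by positivity) h1 2
    have h4 : α ^ 4 / 16 ≤ Real.exp (α ^ 2 / 2) := by nlinarith [h2, h3]
    have h5 : (Real.exp (α ^ 2 / 2))⁻¹ ≤ (α ^ 4 / 16)⁻¹ :=
      inv_anti₀ (by positivity) h4
    rw [inv_div] at h5
    have heq : (-α ^ 2 / 2 : ℝ) = -(α ^ 2 / 2) := by ring
    rw [heq, Real.exp_neg]
    exact h5
  -- sqrt pi bound
  have hsp : Real.sqrt π ≤ 1.775 := sqrt_pi_le
  have hsp0 : 0 < Real.sqrt π := Real.sqrt_pos.mpr Real.pi_pos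
  -- put it together
  have hcoef : (1.126 : ℝ) ≤ 2 / Real.sqrt π := by
    rw [le_div_iff₀ hsp0]; nlinarith [hsp, hsp0]
  have hmain : (2 / Real.sqrt π) * ((1 - b0 α ^ 2) * ((Real.sqrt 2 * α)⁻¹ * 2))
      ≥ 1.29 / α := by
    have hinv : (Real.sqrt 2 * α)⁻¹ * 2 = 2 / (Real.sqrt 2 * α) := by
      rw [div_eq_mul_inv]; ring
    rw [ge_iff_le, hinv]
    have hsa : Real.sqrt 2 * α ≤ 1.4143 * α := by
      have h2 : Real.sqrt 2 ≤ 1.4143 := by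
        have : Real.sqrt 2 = Real.sqrt 2 := rfl
        calc Real.sqrt 2 ≤ Real.sqrt (1.4143 ^ 2) := Real.sqrt_le_sqrt (by norm_num)
          _ = 1.4143 := Real.sqrt_sq (by norm_num)
      nlinarith
    have hd : (2 : ℝ) / (1.4143 * α) ≤ 2 / (Real.sqrt 2 * α) := by
      apply div_le_div_of_nonneg_left (by norm_num) (by positivity) hsa
    have hb2 : (0.922 : ℝ) ≤ 1 - b0 α ^ 2 := by linarith
    have hstep : (1.126 : ℝ) * (0.922 * (2 / (1.4143 * α)))
        ≤ (2 / Real.sqrt π) * ((1 - b0 α ^ 2) * (2 / (Real.sqrt 2 * α))) := by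
      apply mul_le_mul hcoef _ (by positivity) (by positivity)
      apply mul_le_mul hb2 hd (by positivity) (by linarith)
    have heqc : (1.126 : ℝ) * (0.922 * (2 / (1.4143 * α)))
        = (1.126 * 0.922 * 2 / 1.4143) / α := by
      field_simp
    calc (1.29 : ℝ) / α ≤ 1.126 * (0.922 * (2 / (1.4143 * α))) := by
          rw [heqc]; gcongr; norm_num
      _ ≤ _ := hstep
  have h16 : 16 / α ^ 4 ≤ 0.25 / α := by
    have hcube : (64:ℝ) ≤ α ^ 3 := by nlinarith [hα, hα0]
    rw [div_le_div_iff₀ (by positivity) (by positivity)]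
    nlinarith [hcube, hα0]
  unfold c1
  have hI2 : (2 / Real.sqrt π) * ((1 - b0 α ^ 2) * ((Real.sqrt 2 * α)⁻¹ * 2))
      ≤ (2 / Real.sqrt π) *
        (∫ x in (-b0 α)..(b0 α), Real.exp (-x ^ 2) * Real.cos (Real.sqrt 2 * x * α)) := by
    apply mul_le_mul_of_nonneg_left hIntLB (by positivity)
  have h1a : (1:ℝ) / α ≤ 1.29 / α - 0.25 / α := by
    rw [div_sub_div_same, div_le_div_iff₀ hα0 hα0]; nlinarith
  linarith

/-- For every `η > 0` there exists `α₀ > 0` such that for all `α ≥ α₀` the violation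
condition C2 (with `c₂ = 1`, so `c₂(c₂+c₃) = 2 e^{−η α²/2}`) holds:
`2·e^{−η α²/2} < 2·c₁(α)²`. -/
theorem condition_C2_for_large_amplitudes :
    ∀ η > (0 : ℝ), ∃ α₀ > (0 : ℝ), ∀ α ≥ α₀,
      2 * Real.exp (-η * α ^ 2 / 2) < 2 * (c1 α) ^ 2 := by
  intro η hη
  -- α² exp(-η α²/2) → 0
  have ht : Filter.Tendsto (fun t : ℝ => t * Real.exp (-t)) Filter.atTop (nhds 0) := by
    simpa using Real.tendsto_pow_mul_exp_neg_atTop_nhds_zero 1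
  have hcomp : Filter.Tendsto (fun α : ℝ => η * α ^ 2 / 2) Filter.atTop Filter.atTop := by
    apply Filter.Tendsto.atTop_div_const (by norm_num)
    exact (Filter.tendsto_pow_atTop (two_ne_zero)).const_mul_atTop hη
  have h0 : Filter.Tendsto (fun α : ℝ => (2 / η) * ((η * α ^ 2 / 2) *
      Real.exp (-(η * α ^ 2 / 2)))) Filter.atTop (nhds 0) := by
    have := (ht.comp hcomp).const_mul (2 / η)
    simpa using this
  have h0' : Filter.Tendsto (fun α : ℝ => α ^ 2 * Real.exp (-η * α ^ 2 / 2))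
      Filter.atTop (nhds 0) := by
    apply h0.congr
    intro α
    have hηne : η ≠ 0 := ne_of_gt hη
    have : -(η * α ^ 2 / 2) = -η * α ^ 2 / 2 := by ring
    rw [this]
    field_simp
  have hev : ∀ᶠ α : ℝ in Filter.atTop, α ^ 2 * Real.exp (-η * α ^ 2 / 2) < 1 :=
    h0'.eventually (gt_mem_nhds one_pos)
  obtain ⟨α₁, hα₁⟩ := Filter.eventually_atTop.mp hev
  refine ⟨max α₁ 4, by positivity, fun α hα => ?_⟩
  have hα4 : (4:ℝ) ≤ α := le_trans (le_max_right _ _) hα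
  have hα0 : (0:ℝ) < α := by linarith
  have hc1 : 1 / α ≤ c1 α := c1_ge α hα4
  have hlt : α ^ 2 * Real.exp (-η * α ^ 2 / 2) < 1 :=
    hα₁ α (le_trans (le_max_left _ _) hα)
  have hexp : Real.exp (-η * α ^ 2 / 2) < 1 / α ^ 2 := by
    rw [lt_div_iff₀ (by positivity)]
    nlinarith [Real.exp_pos (-η * α ^ 2 / 2)]
  have h1α : (0:ℝ) < 1 / α := by positivity
  have hsq : 1 / α ^ 2 ≤ (c1 α) ^ 2 := by
    have h1 : (1 / α) ^ 2 ≤ (c1 α) ^ 2 := sq_le_sq' (by linarith) hc1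
    calc 1 / α ^ 2 = (1 / α) ^ 2 := by rw [div_pow, one_pow]
      _ ≤ _ := h1
  linarith
end

section
/- Let c₁, c₂, c₃ be real numbers satisfying C1: c₃(c₂+c₃) < 2c₁² and C2: c₂(c₂+c₃) < 2c₁². Then 4c₁² − (c₂+c₃)² > 0, and the supremum of f(s) = ((c₂+c₃)² − 4c₁²)·s⁴ + (4c₁² − 2c₂(c₂+c₃))·s² + c₂² over s ∈ [−1,1] equals (2c₁² − c₂(c₂+c₃))² / (4c₁² − (c₂+c₃)²) + c₂², and it is attained at the interior points s with s² = (4c₁² − 2c₂(c₂+c₃)) / (2·(4c₁² − (c₂+c₃)²)). -/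
/-- Given C1: `c₃(c₂+c₃) < 2c₁²` and C2: `c₂(c₂+c₃) < 2c₁²`, one has
`4c₁² − (c₂+c₃)² > 0`, the supremum over `s ∈ [−1,1]` of
`f(s) = ((c₂+c₃)² − 4c₁²)s⁴ + (4c₁² − 2c₂(c₂+c₃))s² + c₂²` equals
`(2c₁² − c₂(c₂+c₃))²/(4c₁² − (c₂+c₃)²) + c₂²` (and is attained), and it is attained at the
interior points `s` with `s² = (4c₁² − 2c₂(c₂+c₃))/(2(4c₁² − (c₂+c₃)²))`. -/
theorem chsh_sup_formula (c₁ c₂ c₃ : ℝ)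
    (hC1 : c₃ * (c₂ + c₃) < 2 * c₁ ^ 2)
    (hC2 : c₂ * (c₂ + c₃) < 2 * c₁ ^ 2) :
    0 < 4 * c₁ ^ 2 - (c₂ + c₃) ^ 2 ∧
    IsGreatest
      ((fun s : ℝ => ((c₂ + c₃) ^ 2 - 4 * c₁ ^ 2) * s ^ 4
          + (4 * c₁ ^ 2 - 2 * c₂ * (c₂ + c₃)) * s ^ 2 + c₂ ^ 2) '' Set.Icc (-1 : ℝ) 1)
      ((2 * c₁ ^ 2 - c₂ * (c₂ + c₃)) ^ 2 / (4 * c₁ ^ 2 - (c₂ + c₃) ^ 2) + c₂ ^ 2) ∧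
    ∀ s : ℝ,
      s ^ 2 = (4 * c₁ ^ 2 - 2 * c₂ * (c₂ + c₃)) / (2 * (4 * c₁ ^ 2 - (c₂ + c₃) ^ 2)) →
        s ∈ Set.Ioo (-1 : ℝ) 1 ∧
        ((c₂ + c₃) ^ 2 - 4 * c₁ ^ 2) * s ^ 4
            + (4 * c₁ ^ 2 - 2 * c₂ * (c₂ + c₃)) * s ^ 2 + c₂ ^ 2
          = (2 * c₁ ^ 2 - c₂ * (c₂ + c₃)) ^ 2 / (4 * c₁ ^ 2 - (c₂ + c₃) ^ 2) + c₂ ^ 2 := by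
  have hD : 0 < 4 * c₁ ^ 2 - (c₂ + c₃) ^ 2 := by nlinarith
  have hDne : (4 * c₁ ^ 2 - (c₂ + c₃) ^ 2) ≠ 0 := ne_of_gt hD
  set t : ℝ := (4 * c₁ ^ 2 - 2 * c₂ * (c₂ + c₃)) / (2 * (4 * c₁ ^ 2 - (c₂ + c₃) ^ 2)) with ht
  have h2D : 0 < 2 * (4 * c₁ ^ 2 - (c₂ + c₃) ^ 2) := by linarith
  have htpos : 0 < t := by
    apply div_pos; · linarith
    · exact h2D
  have htlt : t < 1 := by
    rw [div_lt_one h2D]; nlinarith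
  -- key: for any s with s^2 = t, the value equals the claimed max
  have key : ∀ s : ℝ, s ^ 2 = t →
      ((c₂ + c₃) ^ 2 - 4 * c₁ ^ 2) * s ^ 4
          + (4 * c₁ ^ 2 - 2 * c₂ * (c₂ + c₃)) * s ^ 2 + c₂ ^ 2
        = (2 * c₁ ^ 2 - c₂ * (c₂ + c₃)) ^ 2 / (4 * c₁ ^ 2 - (c₂ + c₃) ^ 2) + c₂ ^ 2 := by
    intro s hs
    have hs4 : s ^ 4 = t ^ 2 := by rw [show s ^ 4 = (s ^ 2) ^ 2 by ring, hs]
    rw [hs, hs4, ht]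
    field_simp
    ring
  refine ⟨hD, ⟨⟨Real.sqrt t, ?_, ?_⟩, ?_⟩, ?_⟩
  · constructor
    · have := Real.sqrt_nonneg t; linarith
    · rw [show (1:ℝ) = Real.sqrt 1 by simp]
      exact Real.sqrt_le_sqrt htlt.le
  · exact key _ (Real.sq_sqrt htpos.le)
  · rintro y ⟨s, _, rfl⟩
    simp only
    rw [← sub_le_iff_le_add, le_div_iff₀ hD]
    nlinarith [sq_nonneg ((2 * c₁ ^ 2 - c₂ * (c₂ + c₃)) - (4 * c₁ ^ 2 - (c₂ + c₃) ^ 2) * s ^ 2)]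
  · intro s hs
    refine ⟨?_, key s hs⟩
    have h1 : s ^ 2 < 1 := by rw [hs]; exact htlt
    constructor <;> nlinarith
end

section
/- Let c₁, c₂, c₃ be real numbers with |c₂| ≤ 1 and |c₃| ≤ 1, and let f(s) = ((c₂+c₃)² − 4c₁²)·s⁴ + (4c₁² − 2c₂(c₂+c₃))·s² + c₂². If there exists s ∈ [−1,1] with f(s) > 1, then both conditions C1: c₃(c₂+c₃) < 2c₁² and C2: c₂(c₂+c₃) < 2c₁² hold. That is, C1 and C2 are necessary conditions for a CHSH violation S > 2. -/
/-- If `|c₂| ≤ 1`, `|c₃| ≤ 1` and `f(s) > 1` for some `s ∈ [−1,1]`, where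
`f(s) = ((c₂+c₃)² − 4c₁²)s⁴ + (4c₁² − 2c₂(c₂+c₃))s² + c₂²`, then both
C1: `c₃(c₂+c₃) < 2c₁²` and C2: `c₂(c₂+c₃) < 2c₁²` hold; i.e. C1 and C2 are necessary
for a CHSH violation `S = 2√(f) > 2`. -/
theorem conditions_necessary_for_violation (c₁ c₂ c₃ : ℝ)
    (h₂ : |c₂| ≤ 1) (h₃ : |c₃| ≤ 1)
    (hviol : ∃ s ∈ Set.Icc (-1 : ℝ) 1,
      ((c₂ + c₃) ^ 2 - 4 * c₁ ^ 2) * s ^ 4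
        + (4 * c₁ ^ 2 - 2 * c₂ * (c₂ + c₃)) * s ^ 2 + c₂ ^ 2 > 1) :
    c₃ * (c₂ + c₃) < 2 * c₁ ^ 2 ∧ c₂ * (c₂ + c₃) < 2 * c₁ ^ 2 := by
  obtain ⟨s, hs, h⟩ := hviol
  obtain ⟨hs1, hs2⟩ := hs
  have ht0 : (0:ℝ) ≤ s ^ 2 := sq_nonneg s
  have ht1 : s ^ 2 ≤ 1 := by nlinarith
  have hc2 : c₂ ^ 2 ≤ 1 := by
    have := abs_le.mp h₂; nlinarith [this.1, this.2]
  have hc3 : c₃ ^ 2 ≤ 1 := by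
    have := abs_le.mp h₃; nlinarith [this.1, this.2]
  constructor
  · by_contra hC
    push_neg at hC
    rcases le_or_gt ((c₂ + c₃) ^ 2 - 4 * c₁ ^ 2) 0 with hA | hA
    · -- A ≤ 0: g(1) - g(t) = (1-t)(A(1+t)+B) ≥ 0, so g(t) ≤ c₃² ≤ 1
      have key : 0 ≤ (1 - s ^ 2) *
          (((c₂ + c₃) ^ 2 - 4 * c₁ ^ 2) * (1 + s ^ 2)
            + (4 * c₁ ^ 2 - 2 * c₂ * (c₂ + c₃))) := by
        apply mul_nonneg (by linarith)
        nlinarith [mul_nonneg (neg_nonneg.mpr hA) (by linarith : (0:ℝ) ≤ 1 - s ^ 2)]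
      nlinarith [key]
    · -- A > 0: convex, g(t) ≤ (1-t)g(0) + t g(1) ≤ 1
      nlinarith [mul_nonneg (le_of_lt hA) (mul_nonneg ht0 (sub_nonneg.mpr ht1)),
        mul_nonneg ht0 (sub_nonneg.mpr ht1)]
  · by_contra hC
    push_neg at hC
    rcases le_or_gt ((c₂ + c₃) ^ 2 - 4 * c₁ ^ 2) 0 with hA | hA
    · -- A ≤ 0 and B ≤ 0: g(t) ≤ c₂² ≤ 1
      nlinarith [mul_nonpos_of_nonpos_of_nonneg hA (mul_nonneg ht0 ht0),
        mul_nonneg ht0 ht0]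
    · nlinarith [mul_nonneg (le_of_lt hA) (mul_nonneg ht0 (sub_nonneg.mpr ht1)),
        mul_nonneg ht0 (sub_nonneg.mpr ht1)]
end

section
/- Let c₁, c₂, c₃ be real numbers with c₂ = 1 satisfying C1: c₃(c₂+c₃) < 2c₁² and C2: c₂(c₂+c₃) < 2c₁². Then there exists s ∈ (−1,1) with f(s) > 1, where f(s) = ((c₂+c₃)² − 4c₁²)·s⁴ + (4c₁² − 2c₂(c₂+c₃))·s² + c₂²; consequently the optimized CHSH value 2√(sup_{s∈[−1,1]} f(s)) strictly exceeds 2. -/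
/-! Since `f(s) - c₂² = s²((c₂+c₃)² s² - 4c₁² s² + 4c₁² - 2c₂(c₂+c₃))` and C2 makes the constant
term `4c₁² - 2c₂(c₂+c₃)` of the bracket positive, `f` exceeds `f(0) = c₂² = 1` at every small
nonzero `s`; the supremum over `[-1,1]` is then above `1` too. -/

open Set

theorem exists_mem_Ioo_zero_one_mul_add_pos (A B : ℝ) (hB : 0 < B) :
    ∃ t ∈ Ioo (0 : ℝ) 1, 0 < A * t + B := by
  -- the witness is chosen so that `|A| t ≤ B / 2`
  have hden : 0 < 2 * (|A| + B) := by positivity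
  refine ⟨B / (2 * (|A| + B)), ⟨by positivity, ?_⟩, ?_⟩
  · rw [div_lt_one hden]
    linarith [abs_nonneg A]
  · have hAt : |A| * (B / (2 * (|A| + B))) ≤ B / 2 := by
      rw [← mul_div_assoc, div_le_div_iff₀ hden two_pos]
      nlinarith [abs_nonneg A]
    nlinarith [neg_abs_le A, show 0 < B / (2 * (|A| + B)) by positivity]

theorem exists_mem_Ioo_biquadratic_gt (A B c : ℝ) (hB : 0 < B) :
    ∃ s ∈ Ioo (-1 : ℝ) 1, A * s ^ 4 + B * s ^ 2 + c > c := by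
  obtain ⟨t, ⟨ht₀, ht₁⟩, hAt⟩ := exists_mem_Ioo_zero_one_mul_add_pos A B hB
  have hsq : √t ^ 2 = t := Real.sq_sqrt ht₀.le
  have hlt : √t < 1 := (Real.sqrt_lt' one_pos).2 (by rwa [one_pow])
  refine ⟨√t, ⟨by linarith [Real.sqrt_nonneg t], hlt⟩, ?_⟩
  have hval : A * √t ^ 4 + B * √t ^ 2 + c = t * (A * t + B) + c := by
    rw [show √t ^ 4 = (√t ^ 2) ^ 2 by ring, hsq]
    ring
  rw [hval]
  linarith [mul_pos ht₀ hAt]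

theorem violation_from_conditions_general (c₁ c₂ c₃ : ℝ) (hc₂ : c₂ = 1)
    (hC2 : c₂ * (c₂ + c₃) < 2 * c₁ ^ 2) :
    (∃ s ∈ Set.Ioo (-1 : ℝ) 1,
      ((c₂ + c₃) ^ 2 - 4 * c₁ ^ 2) * s ^ 4
        + (4 * c₁ ^ 2 - 2 * c₂ * (c₂ + c₃)) * s ^ 2 + c₂ ^ 2 > 1) ∧
    2 * Real.sqrt (sSup
      ((fun s : ℝ => ((c₂ + c₃) ^ 2 - 4 * c₁ ^ 2) * s ^ 4
          + (4 * c₁ ^ 2 - 2 * c₂ * (c₂ + c₃)) * s ^ 2 + c₂ ^ 2) '' Set.Icc (-1 : ℝ) 1))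
      > 2 := by
  obtain ⟨s, hs, hfs⟩ := exists_mem_Ioo_biquadratic_gt ((c₂ + c₃) ^ 2 - 4 * c₁ ^ 2)
    (4 * c₁ ^ 2 - 2 * c₂ * (c₂ + c₃)) (c₂ ^ 2) (by linarith)
  replace hfs := lt_of_eq_of_lt (show (1 : ℝ) = c₂ ^ 2 by simp [hc₂]) hfs
  refine ⟨⟨s, hs, hfs⟩, ?_⟩
  set f : ℝ → ℝ := fun s => ((c₂ + c₃) ^ 2 - 4 * c₁ ^ 2) * s ^ 4
    + (4 * c₁ ^ 2 - 2 * c₂ * (c₂ + c₃)) * s ^ 2 + c₂ ^ 2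
  have hsup : 1 < sSup (f '' Icc (-1) 1) :=
    lt_csSup_of_lt (isCompact_Icc.bddAbove_image (by fun_prop))
      (mem_image_of_mem f (Ioo_subset_Icc_self hs)) hfs
  have : 1 < √(sSup (f '' Icc (-1) 1)) := (Real.lt_sqrt zero_le_one).2 (by rwa [one_pow])
  linarith

/-- If `c₂ = 1` and both C1: `c₃(c₂+c₃) < 2c₁²` and C2: `c₂(c₂+c₃) < 2c₁²` hold, then there
is an interior point `s ∈ (−1,1)` with `f(s) > 1`, where
`f(s) = ((c₂+c₃)² − 4c₁²)s⁴ + (4c₁² − 2c₂(c₂+c₃))s² + c₂²`; consequently the optimized CHSH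
value `2√(sup_{s∈[−1,1]} f(s))` strictly exceeds `2`. -/
theorem violation_from_conditions (c₁ c₂ c₃ : ℝ) (hc₂ : c₂ = 1)
    (hC1 : c₃ * (c₂ + c₃) < 2 * c₁ ^ 2)
    (hC2 : c₂ * (c₂ + c₃) < 2 * c₁ ^ 2) :
    (∃ s ∈ Set.Ioo (-1 : ℝ) 1,
      ((c₂ + c₃) ^ 2 - 4 * c₁ ^ 2) * s ^ 4
        + (4 * c₁ ^ 2 - 2 * c₂ * (c₂ + c₃)) * s ^ 2 + c₂ ^ 2 > 1) ∧
    2 * Real.sqrt (sSup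
      ((fun s : ℝ => ((c₂ + c₃) ^ 2 - 4 * c₁ ^ 2) * s ^ 4
          + (4 * c₁ ^ 2 - 2 * c₂ * (c₂ + c₃)) * s ^ 2 + c₂ ^ 2) '' Set.Icc (-1 : ℝ) 1))
      > 2 :=
  violation_from_conditions_general c₁ c₂ c₃ hc₂ hC2
end

section
/- For every α > 0, the function g(b) = ∫_{−b}^{b} e^{−x²}·cos(√2·x·α) dx on b ∈ [0,∞) attains its global maximum at b₀ = π/(2√2·α); that is, g(b) ≤ g(b₀) for all b ≥ 0, with strict inequality whenever b ≠ b₀. -/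
/-!
Put `ω = √2 α`, `b₀ = π / (2ω)` and `f x = exp (-x²) cos (ω x)`. As `f` is even, the integral over
`[-b, b]` is `2 ∫₀ᵇ f`, so everything reduces to the sign of `∫_b^{b₀} f`. For `b < b₀` the
integrand is positive since `|ω x| < π / 2`. For `b > b₀` the shift `x = b₀ + t` turns `∫_{b₀}^b f`
into `-∫₀^{b - b₀} exp (-(b₀ + t)²) sin (ω t) dt`, and a strictly decreasing nonnegative weight
against `sin (ω t)` has positive integral over any `[0, s]`: integrating by parts against the
nonnegative antiderivative `(1 - cos (ω t)) / ω` of `sin (ω t)` leaves only nonnegative terms, one of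
them strictly positive.
-/

open Real Set MeasureTheory intervalIntegral

theorem integral_mul_sin_pos_of_deriv_neg {u u' : ℝ → ℝ} {ω s : ℝ} (hω : 0 < ω) (hs : 0 < s)
    (hu : ∀ t ∈ Icc 0 s, HasDerivAt u (u' t) t) (hu'c : ContinuousOn u' (Icc 0 s))
    (hu'neg : ∀ t ∈ Ioc 0 s, u' t < 0) (hus : 0 ≤ u s) :
    0 < ∫ t in 0..s, u t * sin (ω * t) := by
  set v : ℝ → ℝ := fun t => (1 - cos (ω * t)) / ω
  have hv_nonneg (t : ℝ) : 0 ≤ v t := div_nonneg (by linarith [cos_le_one (ω * t)]) hω.le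
  have hv (t : ℝ) : HasDerivAt v (sin (ω * t)) t := by
    have := (((hasDerivAt_id t).const_mul ω).cos.const_sub 1).div_const ω
    simpa [v, mul_div_cancel_right₀ _ hω.ne'] using this
  have hibp := integral_mul_deriv_eq_deriv_mul (a := 0) (b := s) (by rwa [uIcc_of_le hs.le])
    (fun t _ => hv t) (hu'c.intervalIntegrable_of_Icc hs.le)
    ((continuous_sin.comp (continuous_const.mul continuous_id)).intervalIntegrable 0 s)
  obtain ⟨c, hc, hvc⟩ : ∃ c ∈ Ioc 0 s, 0 < v c := by
    refine ⟨min s (π / ω), ⟨by positivity, min_le_left _ _⟩, div_pos ?_ hω⟩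
    have hωc : ω * min s (π / ω) ≤ π :=
      (mul_le_mul_of_nonneg_left (min_le_right _ _) hω.le).trans_eq (by field_simp)
    have := cos_lt_cos_of_nonneg_of_le_pi le_rfl hωc (by positivity)
    rw [cos_zero] at this
    linarith
  have hu'v : ∫ t in 0..s, u' t * v t < ∫ _ in 0..s, (0 : ℝ) :=
    integral_lt_integral_of_continuousOn_of_le_of_exists_lt hs
      (hu'c.mul (by fun_prop : Continuous v).continuousOn) continuousOn_const
      (fun t ht => mul_nonpos_of_nonpos_of_nonneg (hu'neg t ht).le (hv_nonneg t))
      ⟨c, Ioc_subset_Icc_self hc, mul_neg_of_neg_of_pos (hu'neg c hc) hvc⟩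
  rw [intervalIntegral.integral_zero] at hu'v
  have hv0 : v 0 = 0 := by simp [v]
  rw [hibp, hv0, mul_zero, sub_zero]
  linarith [mul_nonneg hus (hv_nonneg s)]

theorem integral_neg_to_self_of_even {f : ℝ → ℝ} {b : ℝ} (heven : ∀ x, f (-x) = f x)
    (hf : IntervalIntegrable f volume (-b) b) :
    ∫ x in -b..b, f x = 2 * ∫ x in 0..b, f x := by
  have hneg : ∫ x in -b..0, f x = ∫ x in 0..b, f x := by
    simpa only [neg_zero, heven] using (integral_comp_neg (a := 0) (b := b) f).symm
  have h0 : (0 : ℝ) ∈ uIcc (-b) b := by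
    rcases le_total 0 b with h | h <;> simp [h]
  rw [← integral_add_adjacent_intervals (hf.mono_set (uIcc_subset_uIcc_left h0))
    (hf.mono_set (uIcc_subset_uIcc_right h0)), hneg, two_mul]

theorem mul_pi_div_two_mul {ω : ℝ} (hω : ω ≠ 0) : ω * (π / (2 * ω)) = π / 2 := by
  field_simp

section GaussianCos

variable {ω : ℝ}

theorem intervalIntegrable_exp_neg_sq_mul_cos (a b : ℝ) :
    IntervalIntegrable (fun x => exp (-x ^ 2) * cos (ω * x)) volume a b := by
  apply Continuous.intervalIntegrable
  fun_prop

theorem integral_exp_neg_sq_mul_cos_pos {a b : ℝ} (hω : 0 < ω) (ha : -(π / (2 * ω)) ≤ a)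
    (hab : a < b) (hb : b ≤ π / (2 * ω)) :
    0 < ∫ x in a..b, exp (-x ^ 2) * cos (ω * x) := by
  refine intervalIntegral_pos_of_pos_on (intervalIntegrable_exp_neg_sq_mul_cos a b)
    (fun x hx => mul_pos (exp_pos _) (cos_pos_of_mem_Ioo ⟨?_, ?_⟩)) hab
  · calc -(π / 2) = ω * -(π / (2 * ω)) := by rw [mul_neg, mul_pi_div_two_mul hω.ne']
      _ < ω * x := by gcongr; exact ha.trans_lt hx.1
  · calc ω * x < ω * (π / (2 * ω)) := by gcongr; exact hx.2.trans_le hb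
      _ = π / 2 := mul_pi_div_two_mul hω.ne'

theorem integral_exp_neg_sq_mul_cos_neg {b : ℝ} (hω : 0 < ω) (hb : π / (2 * ω) < b) :
    ∫ x in π / (2 * ω)..b, exp (-x ^ 2) * cos (ω * x) < 0 := by
  set b₀ := π / (2 * ω)
  have hb₀ : 0 < b₀ := by positivity
  have hshift (t : ℝ) :
      exp (-(t + b₀) ^ 2) * cos (ω * (t + b₀)) = -(exp (-(t + b₀) ^ 2) * sin (ω * t)) := by
    rw [mul_add, mul_pi_div_two_mul hω.ne', cos_add_pi_div_two, mul_neg]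
  have hu (t : ℝ) : HasDerivAt (fun t => exp (-(t + b₀) ^ 2))
      (-(2 * (t + b₀)) * exp (-(t + b₀) ^ 2)) t := by
    have := ((((hasDerivAt_id' t).add_const b₀).fun_pow 2).fun_neg).exp
    convert this using 1
    ring
  have hdecay : ∀ t ∈ Ioc 0 (b - b₀), -(2 * (t + b₀)) * exp (-(t + b₀) ^ 2) < 0 := fun t ht =>
    mul_neg_of_neg_of_pos (by linarith [ht.1]) (exp_pos _)
  have hsin_pos := integral_mul_sin_pos_of_deriv_neg hω (sub_pos.2 hb) (fun t _ => hu t)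
    (by fun_prop) hdecay (exp_pos _).le
  have hsub : ∫ x in b₀..b, exp (-x ^ 2) * cos (ω * x) =
      ∫ t in 0..b - b₀, exp (-(t + b₀) ^ 2) * cos (ω * (t + b₀)) := by
    rw [integral_comp_add_right (fun x => exp (-x ^ 2) * cos (ω * x)), zero_add, sub_add_cancel]
  rw [hsub]
  simp only [hshift, intervalIntegral.integral_neg]
  linarith

theorem integral_zero_to_exp_neg_sq_mul_cos_lt {b : ℝ} (hω : 0 < ω) (hb : -(π / (2 * ω)) ≤ b)
    (hne : b ≠ π / (2 * ω)) :
    ∫ x in 0..b, exp (-x ^ 2) * cos (ω * x) <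
      ∫ x in 0..π / (2 * ω), exp (-x ^ 2) * cos (ω * x) := by
  rcases hne.lt_or_gt with hlt | hgt
  · rw [← sub_pos, integral_interval_sub_left (intervalIntegrable_exp_neg_sq_mul_cos 0 _)
      (intervalIntegrable_exp_neg_sq_mul_cos 0 _)]
    exact integral_exp_neg_sq_mul_cos_pos hω hb hlt le_rfl
  · rw [← sub_neg, integral_interval_sub_left (intervalIntegrable_exp_neg_sq_mul_cos 0 _)
      (intervalIntegrable_exp_neg_sq_mul_cos 0 _)]
    exact integral_exp_neg_sq_mul_cos_neg hω hgt

theorem integral_neg_to_self_exp_neg_sq_mul_cos_lt {b : ℝ} (hω : 0 < ω) (hb : 0 ≤ b)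
    (hne : b ≠ π / (2 * ω)) :
    ∫ x in -b..b, exp (-x ^ 2) * cos (ω * x) <
      ∫ x in -(π / (2 * ω))..π / (2 * ω), exp (-x ^ 2) * cos (ω * x) := by
  have heven (x : ℝ) : exp (-(-x) ^ 2) * cos (ω * -x) = exp (-x ^ 2) * cos (ω * x) := by
    rw [neg_sq, mul_neg, cos_neg]
  rw [integral_neg_to_self_of_even heven (intervalIntegrable_exp_neg_sq_mul_cos _ _),
    integral_neg_to_self_of_even heven (intervalIntegrable_exp_neg_sq_mul_cos _ _)]
  have hb₀ : 0 < π / (2 * ω) := by positivity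
  linarith [integral_zero_to_exp_neg_sq_mul_cos_lt hω (by linarith) hne]

end GaussianCos

/-- For every `α > 0`, the function `g(b) = ∫_{−b}^{b} e^{−x²} cos(√2 x α) dx` on `b ∈ [0,∞)`
attains its global maximum at `b₀ = π/(2√2 α)`: `g(b) ≤ g(b₀)` for all `b ≥ 0`, with strict
inequality whenever `b ≠ b₀`. -/
theorem optimal_binning (α : ℝ) (hα : 0 < α) :
    ∀ b ≥ (0 : ℝ),
      (∫ x in (-b)..b, Real.exp (-x ^ 2) * Real.cos (Real.sqrt 2 * x * α))
          ≤ (∫ x in (-(π / (2 * Real.sqrt 2 * α)))..(π / (2 * Real.sqrt 2 * α)),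
              Real.exp (-x ^ 2) * Real.cos (Real.sqrt 2 * x * α)) ∧
      (b ≠ π / (2 * Real.sqrt 2 * α) →
        (∫ x in (-b)..b, Real.exp (-x ^ 2) * Real.cos (Real.sqrt 2 * x * α))
          < (∫ x in (-(π / (2 * Real.sqrt 2 * α)))..(π / (2 * Real.sqrt 2 * α)),
              Real.exp (-x ^ 2) * Real.cos (Real.sqrt 2 * x * α))) := by
  intro b hb
  have hω : 0 < √2 * α := by positivity
  have hfreq (x : ℝ) : √2 * x * α = √2 * α * x := mul_right_comm _ _ _
  simp only [hfreq, mul_assoc 2 (√2) α]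
  by_cases hb₀ : b = π / (2 * (√2 * α))
  · exact ⟨hb₀ ▸ le_rfl, fun hne => absurd hb₀ hne⟩
  · have hlt := integral_neg_to_self_exp_neg_sq_mul_cos_lt hω hb hb₀
    exact ⟨hlt.le, fun _ => hlt⟩
end

section
/- For every α > 0, c₁(α) ≥ e^{−α²/2} > 0, where c₁(α) = (2/√π)·∫_{−b₀(α)}^{b₀(α)} e^{−x²}·cos(√2·x·α) dx − e^{−α²/2} and b₀(α) = π/(2√2·α). In particular, with the optimal binning the homodyne interference coefficient c₁ is strictly positive, since ∫_{−b₀}^{b₀} e^{−x²} cos(√2 x α) dx ≥ ∫_{−∞}^{∞} e^{−x²} cos(√2 x α) dx = √π·e^{−α²/2}. -/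
open Real

/-!
The Gaussian–cosine integral over the whole line is `√π e^{-ω²/4}`, so it suffices to show that
the two tails beyond `±b` contribute a nonpositive amount when `sin (ω b) = 1`. By evenness the
tails are equal, and on `(b, ∞)` the antiderivative `e^{-x²} (sin (ω x) - 1) / ω` of
`e^{-x²} cos (ω x) + 2x e^{-x²} (1 - sin (ω x)) / ω` vanishes at both ends, while the second
summand is nonnegative.
-/

open MeasureTheory Set Filter Topology

theorem intervalIntegral_neg_self_eq_integral_sub_two_nsmul_integral_Ioi {E : Type*}
    [NormedAddCommGroup E] [NormedSpace ℝ E] {f : ℝ → E} (hf : Integrable f)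
    (heven : ∀ x, f (-x) = f x) (b : ℝ) :
    ∫ x in -b..b, f x = (∫ x, f x) - 2 • ∫ x in Ioi b, f x := by
  have hleft : ∫ x in Iic (-b), f x = ∫ x in Ioi b, f x := by
    simp_rw [← integral_comp_neg_Ioi, heven]
  rw [← intervalIntegral.integral_Iic_sub_Iic hf.integrableOn hf.integrableOn,
    ← intervalIntegral.integral_Iic_add_Ioi hf.integrableOn hf.integrableOn (b := b), hleft,
    two_nsmul]
  abel

theorem integral_exp_neg_sq_mul_cos (ω : ℝ) :
    ∫ x : ℝ, exp (-x ^ 2) * cos (ω * x) = √π * exp (-ω ^ 2 / 4) := by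
  have hb : (-1 : ℂ).re < 0 := by norm_num
  have hre (x : ℝ) : exp (-x ^ 2) * cos (ω * x)
      = RCLike.re (Complex.exp (-1 * x ^ 2 + ω * Complex.I * x + 0)) := by
    rw [RCLike.re_to_complex, Complex.exp_re, ← Complex.ofReal_pow]
    simp [-Complex.ofReal_pow]
  have hsqrt : (π / -(-1 : ℂ)) ^ (1 / 2 : ℂ) = ((√π : ℝ) : ℂ) := by
    rw [Real.sqrt_eq_rpow, Complex.ofReal_cpow pi_pos.le]
    simp
  have hexp : (0 : ℂ) - (ω * Complex.I) ^ 2 / (4 * -1) = ((-ω ^ 2 / 4 : ℝ) : ℂ) := by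
    push_cast
    ring_nf
    rw [Complex.I_sq]
    ring
  simp_rw [hre]
  rw [_root_.integral_re (integrable_cexp_quadratic' hb _ _), integral_cexp_quadratic hb, hsqrt,
    hexp, ← Complex.ofReal_exp, ← Complex.ofReal_mul, RCLike.re_to_complex, Complex.ofReal_re]

theorem integrable_exp_neg_sq_mul_cos (ω : ℝ) :
    Integrable fun x : ℝ => exp (-x ^ 2) * cos (ω * x) := by
  refine ((integrable_exp_neg_mul_sq one_pos).mul_bdd (g := fun x => cos (ω * x)) (by fun_prop)
    (ae_of_all _ fun x => abs_cos_le_one (ω * x))).congr (ae_of_all _ fun x => ?_)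
  simp

theorem integral_Ioi_exp_neg_sq_mul_cos_nonpos {ω b : ℝ} (hω : 0 < ω) (hb : 0 ≤ b)
    (hsin : sin (ω * b) = 1) :
    ∫ x in Ioi b, exp (-x ^ 2) * cos (ω * x) ≤ 0 := by
  set s : ℝ → ℝ := fun x => (1 - sin (ω * x)) / ω
  have hs_nonneg (x : ℝ) : 0 ≤ s x := div_nonneg (sub_nonneg.2 (sin_le_one _)) hω.le
  have hs_le (x : ℝ) : ‖s x‖ ≤ 2 / ω := by
    rw [norm_of_nonneg (hs_nonneg x)]
    exact div_le_div_of_nonneg_right (by linarith [neg_one_le_sin (ω * x)]) hω.le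
  set F : ℝ → ℝ := fun x => exp (-x ^ 2) * -s x
  set H : ℝ → ℝ := fun x => x * exp (-x ^ 2) * (2 * s x)
  have hF (x : ℝ) : HasDerivAt F (exp (-x ^ 2) * cos (ω * x) + H x) x := by
    refine (((hasDerivAt_pow 2 x).fun_neg.exp).fun_mul
      ((((hasDerivAt_id x).const_mul ω).sin.const_sub 1).div_const ω).fun_neg).congr_deriv ?_
    simp only [H, s, id]
    field_simp
    ring
  have hF_tendsto : Tendsto F atTop (𝓝 0) := by
    have hexp : Tendsto (fun x : ℝ => exp (-x ^ 2)) atTop (𝓝 0) :=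
      tendsto_exp_atBot.comp (tendsto_neg_atTop_atBot.comp (tendsto_pow_atTop two_ne_zero))
    exact hexp.zero_mul_isBoundedUnder_le
      (isBoundedUnder_of ⟨2 / ω, fun x => (norm_neg (s x)).trans_le (hs_le x)⟩)
  have hH : Integrable H := by
    refine ((integrable_mul_exp_neg_mul_sq one_pos).mul_bdd (g := fun x => 2 * s x)
      (c := 2 * (2 / ω)) (by fun_prop) (ae_of_all _ fun x => ?_)).congr (ae_of_all _ fun x => ?_)
    · rw [norm_mul, Real.norm_two]
      exact mul_le_mul_of_nonneg_left (hs_le x) zero_le_two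
    · simp [H]
  have hH_nonneg : 0 ≤ ∫ x in Ioi b, H x :=
    setIntegral_nonneg measurableSet_Ioi fun x hx => by
      have := hs_nonneg x
      have : 0 ≤ x := hb.trans hx.out.le
      positivity
  have hFTC := integral_Ioi_of_hasDerivAt_of_tendsto' (a := b) (fun x _ => hF x)
    ((integrable_exp_neg_sq_mul_cos ω).add hH).integrableOn hF_tendsto
  rw [integral_add (integrable_exp_neg_sq_mul_cos ω).integrableOn hH.integrableOn] at hFTC
  simp only [F, s, hsin, sub_self, zero_div, neg_zero, mul_zero] at hFTC
  linarith

theorem sqrt_pi_mul_exp_le_intervalIntegral_exp_neg_sq_mul_cos {ω b : ℝ} (hω : 0 < ω)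
    (hb : 0 ≤ b) (hsin : sin (ω * b) = 1) :
    √π * exp (-ω ^ 2 / 4) ≤ ∫ x in -b..b, exp (-x ^ 2) * cos (ω * x) := by
  rw [intervalIntegral_neg_self_eq_integral_sub_two_nsmul_integral_Ioi
      (integrable_exp_neg_sq_mul_cos ω) (fun x => by rw [neg_sq, mul_neg, cos_neg]),
    integral_exp_neg_sq_mul_cos, nsmul_eq_mul]
  linarith [integral_Ioi_exp_neg_sq_mul_cos_nonpos hω hb hsin]

/-- For every `α > 0`, `c₁(α) ≥ e^{−α²/2} > 0`; in particular, with the optimal binning the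
homodyne interference coefficient `c₁` is strictly positive. -/
theorem c1_positive (α : ℝ) (hα : 0 < α) :
    Real.exp (-α ^ 2 / 2) ≤ c1 α ∧ 0 < Real.exp (-α ^ 2 / 2) ∧ 0 < c1 α := by
  have hω : 0 < √2 * α := by positivity
  have hb : 0 ≤ b0 α := by unfold b0; positivity
  have hsin : sin (√2 * α * b0 α) = 1 := by
    rw [← sin_pi_div_two]
    congr 1
    unfold b0
    field_simp
  have hexp : -(√2 * α) ^ 2 / 4 = -α ^ 2 / 2 := by
    rw [mul_pow, sq_sqrt zero_le_two]
    ring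
  have hI := sqrt_pi_mul_exp_le_intervalIntegral_exp_neg_sq_mul_cos hω hb hsin
  rw [hexp] at hI
  have hc1 : Real.exp (-α ^ 2 / 2) ≤ c1 α := by
    simp_rw [c1, mul_right_comm (√2) _ α]
    rw [le_sub_iff_add_le, ← two_mul]
    calc 2 * Real.exp (-α ^ 2 / 2) = 2 / √π * (√π * Real.exp (-α ^ 2 / 2)) := by field_simp
      _ ≤ _ := by gcongr
  exact ⟨hc1, exp_pos _, (exp_pos _).trans_le hc1⟩
end

section
/- As α → ∞, α·c₁(α) converges to 2√(2/π), where c₁(α) = (2/√π)·∫_{−b₀(α)}^{b₀(α)} e^{−x²}·cos(√2·x·α) dx − e^{−α²/2} and b₀(α) = π/(2√2·α). Equivalently, lim_{α→∞} α·∫_{−b₀(α)}^{b₀(α)} e^{−x²}·cos(√2·x·α) dx = √2. -/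
open Real

/-!
Substituting `u = √2 α x` turns `α ∫_{-b₀}^{b₀} e^{-x²} cos(√2 α x) dx` into
`(1/√2) ∫_{-π/2}^{π/2} e^{-(u/(√2 α))²} cos u du`. The integrand depends continuously on the
parameter `1/(√2 α) → 0`, so the integral tends to `∫_{-π/2}^{π/2} cos u du = 2`, giving `√2`.
The Gaussian term of `c₁` is negligible since `α e^{-α²/2} → 0`.
-/

open Filter Topology

theorem intervalIntegral_mul_comp_mul_left (f g : ℝ → ℝ) {c : ℝ} (hc : c ≠ 0) (a b : ℝ) :
    ∫ x in a..b, f x * g (c * x) = c⁻¹ * ∫ u in c * a..c * b, f (c⁻¹ * u) * g u := by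
  simpa [inv_mul_cancel_left₀ hc] using
    intervalIntegral.integral_comp_mul_left (fun u => f (c⁻¹ * u) * g u) hc (a := a) (b := b)

theorem tendsto_intervalIntegral_exp_neg_sq_mul {f : ℝ → ℝ} (hf : Continuous f) (a b : ℝ) :
    Tendsto (fun s => ∫ u in a..b, exp (-(s * u) ^ 2) * f u) (𝓝 0)
      (𝓝 (∫ u in a..b, f u)) := by
  have hcont := intervalIntegral.continuous_parametric_intervalIntegral_of_continuous'
    (f := fun s u => exp (-(s * u) ^ 2) * f u) (μ := MeasureTheory.volume) (by fun_prop) a b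
  simpa only [zero_mul, zero_pow two_ne_zero, neg_zero, exp_zero, one_mul] using hcont.tendsto 0

theorem tendsto_mul_exp_neg_sq_div_two :
    Tendsto (fun α : ℝ => α * exp (-α ^ 2 / 2)) atTop (𝓝 0) := by
  refine ((tendsto_rpow_abs_mul_exp_neg_mul_sq_cocompact one_half_pos 1).mono_left
    atTop_le_cocompact).congr' ?_
  filter_upwards [eventually_ge_atTop 0] with α hα
  rw [rpow_one, abs_of_nonneg hα]
  ring_nf

theorem mul_integral_exp_neg_sq_mul_cos {α : ℝ} (hα : 0 < α) :
    α * ∫ x in (-b0 α)..(b0 α), exp (-x ^ 2) * cos (√2 * x * α)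
      = (√2)⁻¹ * ∫ u in -(π / 2)..π / 2, exp (-((√2 * α)⁻¹ * u) ^ 2) * cos u := by
  have hc : √2 * α ≠ 0 := by positivity
  have hb : √2 * α * b0 α = π / 2 := by
    rw [b0]
    field_simp
  simp_rw [mul_right_comm _ _ α,
    intervalIntegral_mul_comp_mul_left (fun x => exp (-x ^ 2)) cos hc, mul_neg, hb]
  field_simp

theorem tendsto_mul_integral_exp_neg_sq_mul_cos :
    Tendsto (fun α : ℝ => α * ∫ x in (-b0 α)..(b0 α), exp (-x ^ 2) * cos (√2 * x * α))
      atTop (𝓝 (√2)) := by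
  have hs : Tendsto (fun α : ℝ => (√2 * α)⁻¹) atTop (𝓝 0) :=
    tendsto_inv_atTop_zero.comp (tendsto_id.const_mul_atTop (by positivity))
  have hlim := ((tendsto_intervalIntegral_exp_neg_sq_mul continuous_cos (-(π / 2)) (π / 2)).comp
    hs).const_mul (√2)⁻¹
  rw [integral_cos, sin_neg, sin_pi_div_two, sub_neg_eq_add, one_add_one_eq_two,
    inv_mul_eq_div, div_sqrt] at hlim
  refine hlim.congr' ?_
  filter_upwards [eventually_gt_atTop 0] with α hα
  exact (mul_integral_exp_neg_sq_mul_cos hα).symm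

/-- As `α → ∞`, `α·c₁(α) → 2√(2/π)`; equivalently,
`α·∫_{−b₀(α)}^{b₀(α)} e^{−x²} cos(√2 x α) dx → √2`. -/
theorem c1_asymptotics :
    Filter.Tendsto (fun α : ℝ => α * c1 α) Filter.atTop
      (nhds (2 * Real.sqrt (2 / π))) ∧
    Filter.Tendsto
      (fun α : ℝ => α *
        ∫ x in (-b0 α)..(b0 α), Real.exp (-x ^ 2) * Real.cos (Real.sqrt 2 * x * α))
      Filter.atTop (nhds (Real.sqrt 2)) := by
  refine ⟨?_, tendsto_mul_integral_exp_neg_sq_mul_cos⟩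
  have hlim := (tendsto_mul_integral_exp_neg_sq_mul_cos.const_mul (2 / √π)).sub
    tendsto_mul_exp_neg_sq_div_two
  rw [sub_zero, div_mul_eq_mul_div, mul_div_assoc, ← sqrt_div zero_le_two] at hlim
  refine hlim.congr fun α => ?_
  rw [c1]
  ring
end
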